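/- arXiv:math/0602135 — 5 statements merged into one kernel-verified Lean document; each statement's English description precedes it below -/
import Mathlib

section
/- Let n ≥ 1 be a natural number and let f : [0,∞) → ℝ be a positive, nondecreasing function with f(r) → +∞ as r → +∞; set ψ = log f. If the sequence ζ(m) = f(m) / f(m+2)^{n/(n+1)} tends to +∞ as m → ∞, then there exist r₀ > 0 and C > 0 such that ψ(r) ≤ C·((n+1)/n)^{r/2} for all r ≥ r₀. -/
/-!
Along the integers, `ζ(m) ≥ 1` says `f(m+2)^(n/(n+1)) ≤ f(m)`, i.e. `ψ(m+2) ≤ q ψ(m)` with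
`q = (n+1)/n`. Iterating from a fixed `M` gives `ψ(M + 2k) ≤ q^k ψ(M)`, and since `ψ` is
nondecreasing this interpolates to `ψ(r) ≤ C q^(r/2)` for all real `r ≥ M`; bounding `ψ(M)` by
`max ψ(M) 1` keeps `C` positive.
-/

open Filter Set

theorem Real.log_le_inv_mul_log_of_rpow_le {a b p : ℝ} (hb : 0 < b) (hp : 0 < p)
    (h : b ^ p ≤ a) : Real.log b ≤ p⁻¹ * Real.log a := by
  have h' : p * Real.log b ≤ Real.log a := by
    rw [← Real.log_rpow hb]
    exact Real.log_le_log (Real.rpow_pos_of_pos hb p) h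
  rw [inv_mul_eq_div, le_div_iff₀ hp]
  linarith

theorem le_pow_mul_of_le_mul_add {u : ℕ → ℝ} {q : ℝ} {M d : ℕ} (hq : 0 ≤ q)
    (h : ∀ m, M ≤ m → u (m + d) ≤ q * u m) (k : ℕ) : u (M + d * k) ≤ q ^ k * u M := by
  induction k with
  | zero => simp
  | succ k ih =>
    calc u (M + d * (k + 1)) = u (M + d * k + d) := by rw [mul_add_one, add_assoc]
      _ ≤ q * u (M + d * k) := h _ (Nat.le_add_right M _)
      _ ≤ q * (q ^ k * u M) := mul_le_mul_of_nonneg_left ih hq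
      _ = q ^ (k + 1) * u M := by ring

theorem exists_le_mul_rpow_of_eventually_le_mul {g : ℝ → ℝ} {q : ℝ} {d : ℕ} (hq : 1 ≤ q)
    (hd : 0 < d) (hg : MonotoneOn g (Ici 0))
    (h : ∀ᶠ m : ℕ in atTop, g (m + d) ≤ q * g m) :
    ∃ r₀ > (0 : ℝ), ∃ C > (0 : ℝ), ∀ r : ℝ, r₀ ≤ r →
      g r ≤ C * q ^ (r / d) := by
  obtain ⟨M, hM⟩ := h.exists_forall_of_atTop
  have hq0 : 0 < q := zero_lt_one.trans_le hq
  have hd0 : (0 : ℝ) < d := Nat.cast_pos.mpr hd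
  have iterate (k : ℕ) : g ((M + d * k : ℕ) : ℝ) ≤ q ^ k * max (g M) 1 :=
    calc g ((M + d * k : ℕ) : ℝ) ≤ q ^ k * g M :=
          le_pow_mul_of_le_mul_add (u := fun m : ℕ => g m) hq0.le
            (fun m hm => by simpa using hM m hm) k
      _ ≤ q ^ k * max (g M) 1 := by gcongr; exact le_max_left _ _
  refine ⟨M + 1, by positivity, max (g M) 1 * q ^ (1 - M / d : ℝ), by positivity, ?_⟩
  intro r hr
  set k := ⌈(r - M) / d⌉₊
  have hk : (r - M) / d ≤ k := Nat.le_ceil _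
  have hk' : (k : ℝ) ≤ (r - M) / d + 1 :=
    (Nat.ceil_lt_add_one (div_nonneg (by linarith) hd0.le)).le
  have hr_le : r ≤ ((M + d * k : ℕ) : ℝ) := by
    push_cast
    rw [div_le_iff₀ hd0] at hk
    linarith
  calc g r ≤ g ((M + d * k : ℕ) : ℝ) :=
        hg (mem_Ici.mpr (by linarith [M.cast_nonneg (α := ℝ)]))
          (mem_Ici.mpr (Nat.cast_nonneg _)) hr_le
    _ ≤ q ^ k * max (g M) 1 := iterate k
    _ = max (g M) 1 * q ^ (k : ℝ) := by rw [Real.rpow_natCast, mul_comm]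
    _ ≤ max (g M) 1 * q ^ ((r - M) / d + 1) := by gcongr
    _ = max (g M) 1 * q ^ (1 - M / d : ℝ) * q ^ (r / d) := by
        rw [mul_assoc, ← Real.rpow_add hq0]
        ring_nf

theorem log_bound_of_zeta_tendsto_atTop_general
    (n : ℕ) (hn : 1 ≤ n) (f : ℝ → ℝ)
    (hpos : ∀ r : ℝ, 0 ≤ r → 0 < f r)
    (hmono : ∀ r s : ℝ, 0 ≤ r → r ≤ s → f r ≤ f s)
    (hζ : Tendsto (fun m : ℕ => f m / (f (m + 2)) ^ ((n : ℝ) / (n + 1)))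
      atTop atTop) :
    ∃ r₀ > (0 : ℝ), ∃ C > (0 : ℝ), ∀ r : ℝ, r₀ ≤ r →
      Real.log (f r) ≤ C * ((((n : ℝ) + 1) / n)) ^ (r / 2) := by
  have hn0 : (0 : ℝ) < n := by exact_mod_cast hn
  have hq : 1 ≤ ((n : ℝ) + 1) / n := by rw [le_div_iff₀ hn0]; linarith
  have hψ : MonotoneOn (fun r => Real.log (f r)) (Ici 0) := fun r hr s _ hrs =>
    Real.log_le_log (hpos r hr) (hmono r s hr hrs)
  have hstep : ∀ᶠ m : ℕ in atTop,
      Real.log (f (m + (2 : ℕ))) ≤ ((n : ℝ) + 1) / n * Real.log (f m) := by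
    filter_upwards [hζ.eventually_ge_atTop 1] with m hm
    have hfm2 : 0 < f (m + 2) := hpos _ (by positivity)
    rw [one_le_div (Real.rpow_pos_of_pos hfm2 _)] at hm
    simpa using Real.log_le_inv_mul_log_of_rpow_le hfm2 (by positivity) hm
  simpa using exists_le_mul_rpow_of_eventually_le_mul hq two_pos hψ hstep

/-- Let `n ≥ 1` and let `f : [0,∞) → ℝ` be a positive nondecreasing
function with `f(r) → +∞` as `r → +∞`; set `ψ = log f`.  If the sequence
`ζ(m) = f(m) / f(m+2)^(n/(n+1))` tends to `+∞`, then there are `r₀ > 0` and `C > 0`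
such that `ψ(r) ≤ C ((n+1)/n)^(r/2)` for all `r ≥ r₀`. -/
theorem log_bound_of_zeta_tendsto_atTop
    (n : ℕ) (hn : 1 ≤ n) (f : ℝ → ℝ)
    (hpos : ∀ r : ℝ, 0 ≤ r → 0 < f r)
    (hmono : ∀ r s : ℝ, 0 ≤ r → r ≤ s → f r ≤ f s)
    (hinf : Tendsto f atTop atTop)
    (hζ : Tendsto (fun m : ℕ => f m / (f (m + 2)) ^ ((n : ℝ) / (n + 1)))
      atTop atTop) :
    ∃ r₀ > (0 : ℝ), ∃ C > (0 : ℝ), ∀ r : ℝ, r₀ ≤ r →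
      Real.log (f r) ≤ C * ((((n : ℝ) + 1) / n)) ^ (r / 2) :=
  log_bound_of_zeta_tendsto_atTop_general n hn f hpos hmono hζ
end

section
/- Let n ≥ 1 and let f = e^ψ be a smooth radial density on ℝ^{n+1} with ψ(x) = δ(|x|), where δ is smooth on (0,∞). Suppose there exist a unit vector u ∈ ℝ^{n+1} and a real number c ≠ 0 such that the function p ↦ −c·δ'(|p|)/|p| is constant on the hyperplane Σ = {x ∈ ℝ^{n+1} : ⟨x,u⟩ = c}. Then there exist constants a, b ∈ ℝ such that f(x) = e^{a|x|² + b} whenever |x| ≥ |c|. -/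
open Filter MeasureTheory Set RealInnerProductSpace

/-- Let `f = e^ψ` be a smooth radial density on `ℝ^{n+1}` with
`ψ(x) = δ(|x|)`, `δ` smooth on `(0,∞)`.  If there is a hyperplane
`Σ = {x : ⟨x,u⟩ = c}` (with `|u| = 1`, `c ≠ 0`, so `Σ` misses the origin) on which the
generalized mean curvature `p ↦ −c δ'(|p|)/|p|` is constant, then there are constants
`a, b` with `f(x) = e^{a|x|² + b}` whenever `|x| ≥ |c|`. -/
theorem radial_density_eq_exp_quadratic_of_cmc_hyperplane
    (n : ℕ) (hn : 1 ≤ n) (f : EuclideanSpace ℝ (Fin (n + 1)) → ℝ) (δ : ℝ → ℝ)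
    (hf : ∀ x : EuclideanSpace ℝ (Fin (n + 1)), f x = Real.exp (δ ‖x‖))
    (hδ : ContDiffOn ℝ (⊤ : ℕ∞) δ (Set.Ioi 0))
    (u : EuclideanSpace ℝ (Fin (n + 1))) (hu : ‖u‖ = 1) (c : ℝ) (hc : c ≠ 0)
    (H : ℝ)
    (hcmc : ∀ p : EuclideanSpace ℝ (Fin (n + 1)), ⟪p, u⟫ = c →
      -c * deriv δ ‖p‖ / ‖p‖ = H) :
    ∃ a b : ℝ, ∀ x : EuclideanSpace ℝ (Fin (n + 1)), |c| ≤ ‖x‖ →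
      f x = Real.exp (a * ‖x‖ ^ 2 + b) := by
  have hc' : 0 < |c| := abs_pos.mpr hc
  haveI : Fact (Module.finrank ℝ (EuclideanSpace ℝ (Fin (n + 1))) = n + 1) :=
    ⟨finrank_euclideanSpace_fin⟩
  have hu0 : u ≠ 0 := by intro h; rw [h, norm_zero] at hu; norm_num at hu
  have hK : Module.finrank ℝ ((ℝ ∙ u)ᗮ : Submodule ℝ _) = n :=
    Submodule.finrank_orthogonal_span_singleton hu0
  obtain ⟨v, hvK, hv0⟩ : ∃ v, v ∈ (ℝ ∙ u)ᗮ ∧ v ≠ 0 := by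
    apply Submodule.exists_mem_ne_zero_of_ne_bot
    intro h
    rw [h, finrank_bot] at hK
    omega
  set w : EuclideanSpace ℝ (Fin (n + 1)) := ‖v‖⁻¹ • v with hw
  have hwnorm : ‖w‖ = 1 := by
    rw [hw, norm_smul, norm_inv, norm_norm, inv_mul_cancel₀ (norm_ne_zero_iff.mpr hv0)]
  have hwK : w ∈ (ℝ ∙ u)ᗮ := Submodule.smul_mem _ _ hvK
  have hwu : ⟪w, u⟫ = 0 := by
    have := hwK u (Submodule.mem_span_singleton_self u)
    rwa [real_inner_comm] at this
  have key : ∀ r : ℝ, |c| ≤ r → deriv δ r = -H * r / c := by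
    intro r hr
    have hrpos : 0 < r := lt_of_lt_of_le hc' hr
    set s := Real.sqrt (r ^ 2 - c ^ 2) with hs_def
    have hs0 : 0 ≤ s := Real.sqrt_nonneg _
    have hs : s ^ 2 = r ^ 2 - c ^ 2 :=
      Real.sq_sqrt (by nlinarith [sq_abs c])
    set p : EuclideanSpace ℝ (Fin (n + 1)) := c • u + s • w with hp
    have hpu : ⟪p, u⟫ = c := by
      rw [hp, inner_add_left, real_inner_smul_left, real_inner_smul_left,
        real_inner_self_eq_norm_sq, hu, hwu]
      ring
    have hpnorm : ‖p‖ = r := by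
      have huw : ⟪u, w⟫ = (0 : ℝ) := by rwa [real_inner_comm] at hwu
      have h2 : ‖p‖ ^ 2 = r ^ 2 := by
        rw [hp, norm_add_sq_real, norm_smul, norm_smul, real_inner_smul_left,
          real_inner_smul_right, huw, hu, hwnorm]
        simp only [Real.norm_eq_abs, abs_of_nonneg hs0]
        nlinarith [sq_abs c]
      nlinarith [norm_nonneg p]
    have hH := hcmc p hpu
    rw [hpnorm, div_eq_iff (ne_of_gt hrpos)] at hH
    field_simp
    linarith [hH]
  have hdiff : ∀ r ∈ Ici |c|, HasDerivAt δ (deriv δ r) r := by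
    intro r hr
    have hrpos : 0 < r := lt_of_lt_of_le hc' hr
    exact ((hδ.contDiffAt (Ioi_mem_nhds hrpos)).differentiableAt (by simp)).hasDerivAt
  set F : ℝ → ℝ := fun r => δ r + H / (2 * c) * r ^ 2 with hF_def
  have hF : ∀ r ∈ Ici |c|, HasDerivAt F 0 r := by
    intro r hr
    have h1 : HasDerivAt F (deriv δ r + H / (2 * c) * (2 * r ^ 1)) r :=
      (hdiff r hr).add ((hasDerivAt_pow 2 r).const_mul (H / (2 * c)))
    convert h1 using 1
    rw [key r hr]
    field_simp
    ring
  have hconst : ∀ r ∈ Ici |c|, F r = F |c| := by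
    intro r hr
    exact (convex_Ici |c|).is_const_of_fderivWithin_eq_zero
      (fun x hx => (hF x hx).differentiableAt.differentiableWithinAt)
      (fun x hx => by
        have h2 := (hF x hx).hasFDerivAt.hasFDerivWithinAt.fderivWithin
          (uniqueDiffOn_Ici _ x hx)
        rw [h2]; ext; simp) hr self_mem_Ici
  refine ⟨-(H / (2 * c)), F |c|, fun x hx => ?_⟩
  rw [hf x]
  congr 1
  have := hconst ‖x‖ hx
  simp only [hF_def] at this
  linarith [this]
end

section
/- Let f be a continuous positive monotone density on ℝ and let E ∈ {−∞, +∞} be the end at which f attains its infimum (E = −∞ if f is nondecreasing, E = +∞ if f is nonincreasing). Assume f is integrable on a neighborhood of E. Then for every V > 0 the half-line of weighted volume V containing E (an interval (−∞, x) with vol((−∞,x)) = V if E = −∞, or (x, +∞) with vol((x,+∞)) = V if E = +∞) is an isoperimetric region of volume V, and it is the unique isoperimetric region of volume V. -/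
open Filter MeasureTheory Set

/-- Weighted volume of a set `Ω ⊆ ℝ` with respect to the density `f`:
`vol(Ω) = ∫_Ω f dx`. -/
noncomputable def wvol (f : ℝ → ℝ) (Ω : Set ℝ) : ENNReal :=
  ∫⁻ x in Ω, ENNReal.ofReal (f x)

/-- Weighted perimeter of a set `Ω ⊆ ℝ` with respect to the density `f`:
`P(Ω) = ∑_{x ∈ ∂Ω} f(x)`, the (possibly infinite) sum of `f` over the topological
boundary of `Ω`. -/
noncomputable def wper (f : ℝ → ℝ) (Ω : Set ℝ) : ENNReal :=
  ∑' x : frontier Ω, ENNReal.ofReal (f x)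

/-- `Ω` is an isoperimetric region (minimizer) of weighted volume `V` on the line. -/
def IsIsopRegion (f : ℝ → ℝ) (Ω : Set ℝ) (V : ENNReal) : Prop :=
  IsOpen Ω ∧ wvol f Ω = V ∧
    ∀ U : Set ℝ, IsOpen U → wvol f U = V → wper f Ω ≤ wper f U

open Topology
open scoped Pointwise

/-!
On a nondecreasing positive density every right half-line has infinite volume. So an open
set `Ω` of volume `vol((-∞, x))` contains no right half-line and lies in no `(-∞, b]` with
`b < x` (that has smaller volume); by connectedness its rightmost boundary point `y` then
satisfies `x ≤ y`, whence `P(Ω) ≥ f(y) ≥ f(x) = P((-∞, x))`. For a minimizer this forces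
`∂Ω = {y}`, so `Ω` is the half-line `(-∞, y)`, and comparing volumes gives `y = x`. The
nonincreasing case is the mirror image under `t ↦ -t`.
-/

lemma IsPreconnected.subset_or_disjoint_of_disjoint_frontier {X : Type*} [TopologicalSpace X]
    {I Ω : Set X} (hI : IsPreconnected I) (h : Disjoint I (frontier Ω)) :
    I ⊆ Ω ∨ Disjoint I Ω := by
  have hcover : I ⊆ interior Ω ∪ (closure Ω)ᶜ := fun t ht => by
    by_cases hc : t ∈ closure Ω
    · exact Or.inl (not_not.1 fun hi => h.notMem_of_mem_left ht ⟨hc, hi⟩)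
    · exact Or.inr hc
  rcases hI.subset_or_subset isOpen_interior isClosed_closure.isOpen_compl
      (disjoint_compl_right.mono_left interior_subset_closure) hcover with hΩ | hΩ
  · exact Or.inl (hΩ.trans interior_subset)
  · exact Or.inr (disjoint_compl_left.mono hΩ subset_closure)

lemma eq_Iio_of_frontier_eq_singleton {Ω : Set ℝ} {y : ℝ} (hΩ : IsOpen Ω)
    (hfr : frontier Ω = {y}) (hne : Ω.Nonempty) (hIoi : ¬ Ioi y ⊆ Ω) : Ω = Iio y := by
  have hy : y ∉ Ω := fun hy => hΩ.inter_frontier_eq.subset ⟨hy, hfr ▸ mem_singleton y⟩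
  have hdisj : ∀ {I : Set ℝ}, y ∉ I → Disjoint I (frontier Ω) := fun hyI => by
    rw [hfr, disjoint_singleton_right]; exact hyI
  have hright : Disjoint (Ioi y) Ω :=
    (isPreconnected_Ioi.subset_or_disjoint_of_disjoint_frontier (hdisj (lt_irrefl y))).resolve_left
      hIoi
  have hsub : Ω ⊆ Iio y := fun t ht =>
    lt_of_le_of_ne (not_lt.1 fun hyt => hright.notMem_of_mem_left hyt ht)
      (ne_of_mem_of_not_mem ht hy)
  rcases isPreconnected_Iio.subset_or_disjoint_of_disjoint_frontier (hdisj (lt_irrefl y)) with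
    hleft | hleft
  · exact hsub.antisymm hleft
  · obtain ⟨t, ht⟩ := hne
    exact absurd ht (hleft.notMem_of_mem_left (hsub ht))

lemma exists_mem_frontier_ge {Ω : Set ℝ} {x : ℝ} (hIoi : ∀ b, ¬ Ioi b ⊆ Ω)
    (hIic : ∀ b < x, ¬ Ω ⊆ Iic b) : ∃ y ∈ frontier Ω, x ≤ y := by
  by_contra! hfr
  have hne : (frontier Ω).Nonempty := by
    obtain ⟨t, ht, -⟩ := not_subset.1 (hIic (x - 1) (by linarith))
    exact nonempty_frontier_iff.2 ⟨⟨t, ht⟩, fun hΩ => hIoi 0 (hΩ ▸ subset_univ _)⟩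
  have hbdd : BddAbove (frontier Ω) := ⟨x, fun y hy => (hfr y hy).le⟩
  set b := sSup (frontier Ω)
  have hdisj : Disjoint (Ioi b) (frontier Ω) :=
    disjoint_left.2 fun t ht htΩ => (le_csSup hbdd htΩ).not_gt ht
  have hΩb : Ω ⊆ Iic b := fun t ht => mem_Iic.2 <| not_lt.1 fun hbt =>
    ((isPreconnected_Ioi.subset_or_disjoint_of_disjoint_frontier hdisj).resolve_left
      (hIoi b)).notMem_of_mem_left hbt ht
  exact hIic b (hfr b (isClosed_frontier.csSup_mem hne hbdd)) hΩb

lemma wper_Iio (f : ℝ → ℝ) (x : ℝ) : wper f (Iio x) = ENNReal.ofReal (f x) := by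
  rw [wper, frontier_Iio]
  exact tsum_singleton x fun t => ENNReal.ofReal (f t)

section Perimeter

variable {f : ℝ → ℝ} {Ω : Set ℝ}

lemma ofReal_le_wper {y : ℝ} (hy : y ∈ frontier Ω) : ENNReal.ofReal (f y) ≤ wper f Ω :=
  ENNReal.le_tsum (⟨y, hy⟩ : frontier Ω)

lemma frontier_eq_singleton_of_wper_le (hpos : ∀ x, 0 < f x) {y : ℝ} (hy : y ∈ frontier Ω)
    (hper : wper f Ω ≤ ENNReal.ofReal (f y)) : frontier Ω = {y} := by
  refine eq_singleton_iff_unique_mem.2 ⟨hy, fun z hz => by_contra fun hzy => ?_⟩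
  have hpair : ENNReal.ofReal (f z) + ENNReal.ofReal (f y) ≤ wper f Ω := by
    have hne : (⟨z, hz⟩ : frontier Ω) ≠ ⟨y, hy⟩ := fun h => hzy (congrArg Subtype.val h)
    simpa [wper, Finset.sum_pair hne] using ENNReal.sum_le_tsum (f := fun p : frontier Ω =>
      ENNReal.ofReal (f p)) {⟨z, hz⟩, ⟨y, hy⟩}
  have hz0 : ENNReal.ofReal (f z) ≤ 0 :=
    ENNReal.le_of_add_le_add_right ENNReal.ofReal_ne_top (by simpa using hpair.trans hper)
  exact (ENNReal.ofReal_pos.2 (hpos z)).not_ge hz0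

end Perimeter

section Reflection

variable (f : ℝ → ℝ) (S : Set ℝ)

lemma wvol_comp_neg : wvol (fun t => f (-t)) S = wvol f (-S) := by
  simpa [wvol] using (Measure.measurePreserving_neg volume).setLIntegral_comp_preimage_emb
    (Homeomorph.neg ℝ).measurableEmbedding (fun t => ENNReal.ofReal (f t)) (-S)

lemma wper_comp_neg : wper (fun t => f (-t)) S = wper f (-S) := by
  have hfr : frontier S = -frontier (-S) := by
    simpa using ((Homeomorph.neg ℝ).preimage_frontier (-S)).symm
  exact (Equiv.neg ℝ).subtypeEquiv (p := (· ∈ frontier S)) (q := (· ∈ frontier (-S)))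
    (fun t => by rw [hfr]; exact Iff.rfl) |>.tsum_eq fun t => ENNReal.ofReal (f t)

end Reflection

lemma IsIsopRegion.comp_neg {f : ℝ → ℝ} {S : Set ℝ} {W : ENNReal} (h : IsIsopRegion f S W) :
    IsIsopRegion (fun t => f (-t)) (-S) W := by
  obtain ⟨hopen, hvol, hmin⟩ := h
  refine ⟨hopen.neg, by rwa [wvol_comp_neg, neg_neg], fun U hU hUvol => ?_⟩
  rw [wper_comp_neg, wper_comp_neg, neg_neg]
  exact hmin (-U) hU.neg (by rwa [← wvol_comp_neg])

lemma wvol_mono (f : ℝ → ℝ) {S T : Set ℝ} (h : S ⊆ T) : wvol f S ≤ wvol f T :=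
  lintegral_mono_set h

lemma wvol_Iio_eq_wvol_Iic (f : ℝ → ℝ) (x : ℝ) : wvol f (Iio x) = wvol f (Iic x) :=
  setLIntegral_congr Iio_ae_eq_Iic

section Density

variable {f : ℝ → ℝ} {Ω : Set ℝ}

lemma Monotone.integrableOn_Iic (hf : Monotone f) {a : ℝ} (ha : IntegrableOn f (Iic a))
    (b : ℝ) : IntegrableOn f (Iic b) :=
  (ha.union ((hf.monotoneOn _).integrableOn_isCompact isCompact_Icc)).mono_set
    Iic_subset_Iic_union_Icc

lemma wvol_Iic_eq_ofReal (hnn : ∀ t, 0 ≤ f t) {x : ℝ} (hint : IntegrableOn f (Iic x)) :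
    wvol f (Iic x) = ENNReal.ofReal (∫ t in Iic x, f t) :=
  (ofReal_integral_eq_lintegral_ofReal hint (Eventually.of_forall hnn)).symm

lemma strictMono_integral_Iic (hpos : ∀ x, 0 < f x) (hint : ∀ b, IntegrableOn f (Iic b)) :
    StrictMono fun x => ∫ t in Iic x, f t := fun a b hab => by
  have hIoc : 0 < ∫ t in a..b, f t :=
    intervalIntegral.intervalIntegral_pos_of_pos_on
      ((intervalIntegrable_iff_integrableOn_Ioc_of_le hab.le).2
        ((hint b).mono_set Ioc_subset_Iic_self)) (fun t _ => hpos t) hab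
  have := intervalIntegral.integral_Iic_sub_Iic (hint a) (hint b)
  dsimp only
  linarith

lemma continuous_integral_Iic (hint : ∀ b, IntegrableOn f (Iic b)) :
    Continuous fun x => ∫ t in Iic x, f t :=
  continuous_iff_continuousAt.2 fun x =>
    (hint (x + 1)).continuousOn_Iic_primitive_Iic.continuousAt (Iic_mem_nhds (lt_add_one x))

lemma tendsto_integral_Iic_atBot {a : ℝ} (hint : IntegrableOn f (Iic a)) :
    Tendsto (fun x => ∫ t in Iic x, f t) atBot (𝓝 0) := by
  have := tendsto_setIntegral_of_antitone (μ := volume) (f := f) (s := fun x : ℝ => Iic (-x))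
    (fun _ => measurableSet_Iic) (fun x y hxy => Iic_subset_Iic.2 (neg_le_neg hxy))
    ⟨-a, by simpa⟩
  have hempty : (⋂ x : ℝ, Iic (-x)) = ∅ :=
    eq_empty_of_forall_notMem fun t ht => by
      linarith [mem_Iic.1 (mem_iInter.1 ht (-t + 1))]
  simpa [hempty, Function.comp_def] using this.comp tendsto_neg_atBot_atTop

lemma Monotone.mul_le_integral_Iic (hf : Monotone f) (hnn : ∀ t, 0 ≤ f t) {b : ℝ}
    (hb : 0 ≤ b) (hint : IntegrableOn f (Iic b)) : f 0 * b ≤ ∫ t in Iic b, f t :=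
  calc f 0 * b = ∫ _ in Ioc 0 b, f 0 := by simp [hb, mul_comm]
    _ ≤ ∫ t in Ioc 0 b, f t :=
      setIntegral_mono_on (integrableOn_const (by simp)) (hint.mono_set Ioc_subset_Iic_self)
        measurableSet_Ioc fun t ht => hf ht.1.le
    _ ≤ ∫ t in Iic b, f t :=
      setIntegral_mono_set hint (Eventually.of_forall hnn) Ioc_subset_Iic_self.eventuallyLE

lemma Monotone.wvol_Ioi_eq_top (hf : Monotone f) {b : ℝ} (hb : 0 < f b) :
    wvol f (Ioi b) = ⊤ := by
  refine top_le_iff.1 ?_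
  calc ⊤ = ∫⁻ _ in Ioi b, ENNReal.ofReal (f b) := by simp [hb]
    _ ≤ wvol f (Ioi b) :=
      setLIntegral_mono hf.measurable.ennreal_ofReal fun t ht => ENNReal.ofReal_le_ofReal (hf ht.le)

lemma strictMono_wvol_Iic (hpos : ∀ x, 0 < f x) (hint : ∀ b, IntegrableOn f (Iic b)) :
    StrictMono fun x => wvol f (Iic x) := fun a b hab => by
  simp only [wvol_Iic_eq_ofReal (fun t => (hpos t).le) (hint _)]
  exact (ENNReal.ofReal_lt_ofReal_iff_of_nonneg
    (setIntegral_nonneg measurableSet_Iic fun t _ => (hpos t).le)).2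
    (strictMono_integral_Iic hpos hint hab)

lemma Monotone.not_Ioi_subset_of_wvol_ne_top (hf : Monotone f) (hpos : ∀ x, 0 < f x)
    (hΩ : wvol f Ω ≠ ⊤) (b : ℝ) : ¬ Ioi b ⊆ Ω := fun h =>
  hΩ (top_le_iff.1 (hf.wvol_Ioi_eq_top (hpos b) ▸ wvol_mono f h))

lemma not_subset_Iic_of_wvol_eq (hpos : ∀ x, 0 < f x) (hint : ∀ b, IntegrableOn f (Iic b))
    {x : ℝ} (hΩ : wvol f Ω = wvol f (Iio x)) {b : ℝ} (hb : b < x) : ¬ Ω ⊆ Iic b := by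
  intro h
  have := wvol_mono f h
  rw [hΩ, wvol_Iio_eq_wvol_Iic] at this
  exact (strictMono_wvol_Iic hpos hint hb).not_ge this

lemma wvol_Iio_ne_top (hnn : ∀ t, 0 ≤ f t) {x : ℝ} (hint : IntegrableOn f (Iic x)) :
    wvol f (Iio x) ≠ ⊤ := by
  rw [wvol_Iio_eq_wvol_Iic, wvol_Iic_eq_ofReal hnn hint]
  exact ENNReal.ofReal_ne_top

lemma Monotone.exists_mem_frontier_ge_of_wvol_eq (hf : Monotone f) (hpos : ∀ x, 0 < f x)
    (hint : ∀ b, IntegrableOn f (Iic b)) {x : ℝ} (hΩ : wvol f Ω = wvol f (Iio x)) :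
    ∃ y ∈ frontier Ω, x ≤ y :=
  exists_mem_frontier_ge
    (hf.not_Ioi_subset_of_wvol_ne_top hpos
      (hΩ ▸ wvol_Iio_ne_top (fun t => (hpos t).le) (hint x)))
    fun _ => not_subset_Iic_of_wvol_eq hpos hint hΩ

lemma Monotone.isIsopRegion_Iio (hf : Monotone f) (hpos : ∀ x, 0 < f x)
    (hint : ∀ b, IntegrableOn f (Iic b)) (x : ℝ) : IsIsopRegion f (Iio x) (wvol f (Iio x)) := by
  refine ⟨isOpen_Iio, rfl, fun U _ hU => ?_⟩
  obtain ⟨y, hy, hxy⟩ := hf.exists_mem_frontier_ge_of_wvol_eq hpos hint hU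
  rw [wper_Iio]
  exact (ENNReal.ofReal_le_ofReal (hf hxy)).trans (ofReal_le_wper hy)

lemma Monotone.eq_Iio_of_isIsopRegion (hf : Monotone f) (hpos : ∀ x, 0 < f x)
    (hint : ∀ b, IntegrableOn f (Iic b)) {x : ℝ} (h : IsIsopRegion f Ω (wvol f (Iio x))) :
    Ω = Iio x := by
  obtain ⟨hΩ, hvol, hmin⟩ := h
  obtain ⟨y, hy, hxy⟩ := hf.exists_mem_frontier_ge_of_wvol_eq hpos hint hvol
  have hfr : frontier Ω = {y} := frontier_eq_singleton_of_wper_le hpos hy <|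
    calc wper f Ω ≤ wper f (Iio x) := hmin _ isOpen_Iio rfl
      _ = ENNReal.ofReal (f x) := wper_Iio f x
      _ ≤ ENNReal.ofReal (f y) := ENNReal.ofReal_le_ofReal (hf hxy)
  obtain ⟨t, ht, -⟩ := not_subset.1 (not_subset_Iic_of_wvol_eq hpos hint hvol (sub_one_lt x))
  have hΩy : Ω = Iio y := eq_Iio_of_frontier_eq_singleton hΩ hfr ⟨t, ht⟩
    (hf.not_Ioi_subset_of_wvol_ne_top hpos
      (hvol ▸ wvol_Iio_ne_top (fun t => (hpos t).le) (hint x)) y)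
  have hyx : y = x := (strictMono_wvol_Iic hpos hint).injective <| by
    simpa only [wvol_Iio_eq_wvol_Iic, hΩy] using hvol
  rw [hΩy, hyx]

lemma Monotone.exists_wvol_Iio_eq (hf : Monotone f) (hpos : ∀ x, 0 < f x)
    (hint : ∀ b, IntegrableOn f (Iic b)) {V : ℝ} (hV : 0 < V) :
    ∃ x, wvol f (Iio x) = ENNReal.ofReal V := by
  have hlow : ∃ a, ∫ t in Iic a, f t ≤ V :=
    ((tendsto_integral_Iic_atBot (hint 0)).eventually (eventually_le_nhds hV)).exists
  have hhigh : ∃ b, V ≤ ∫ t in Iic b, f t := ⟨V / f 0, by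
    simpa [mul_div_cancel₀ _ (hpos 0).ne'] using
      hf.mul_le_integral_Iic (fun t => (hpos t).le) (div_nonneg hV.le (hpos 0).le) (hint _)⟩
  obtain ⟨x, hx⟩ :=
    mem_range_of_exists_le_of_exists_ge (continuous_integral_Iic hint) hlow hhigh
  refine ⟨x, ?_⟩
  rw [wvol_Iio_eq_wvol_Iic, wvol_Iic_eq_ofReal (fun t => (hpos t).le) (hint x), ← hx]

lemma Monotone.exists_unique_isIsopRegion_Iio (hf : Monotone f) (hpos : ∀ x, 0 < f x)
    (hint : IntegrableOn f (Iic 0)) {V : ℝ} (hV : 0 < V) :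
    ∃ x : ℝ, wvol f (Iio x) = ENNReal.ofReal V ∧ IsIsopRegion f (Iio x) (ENNReal.ofReal V) ∧
      ∀ Ω : Set ℝ, IsIsopRegion f Ω (ENNReal.ofReal V) → Ω = Iio x := by
  have hint_all := hf.integrableOn_Iic hint
  obtain ⟨x, hx⟩ := hf.exists_wvol_Iio_eq hpos hint_all hV
  refine ⟨x, hx, hx ▸ hf.isIsopRegion_Iio hpos hint_all x, fun Ω hΩ => ?_⟩
  exact hf.eq_Iio_of_isIsopRegion hpos hint_all (hx ▸ hΩ)

lemma Antitone.exists_unique_isIsopRegion_Ioi (hf : Antitone f) (hpos : ∀ x, 0 < f x)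
    (hint : IntegrableOn f (Ici 0)) {V : ℝ} (hV : 0 < V) :
    ∃ x : ℝ, wvol f (Ioi x) = ENNReal.ofReal V ∧ IsIsopRegion f (Ioi x) (ENNReal.ofReal V) ∧
      ∀ Ω : Set ℝ, IsIsopRegion f Ω (ENNReal.ofReal V) → Ω = Ioi x := by
  have hint_neg : IntegrableOn (fun t => f (-t)) (Iic 0) := by simpa using hint.comp_neg
  have hmono : Monotone fun t => f (-t) := fun a b hab => hf (neg_le_neg hab)
  obtain ⟨x, hvol, hisop, huniq⟩ :=
    hmono.exists_unique_isIsopRegion_Iio (fun t => hpos (-t)) hint_neg hV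
  refine ⟨-x, ?_, ?_, fun Ω hΩ => ?_⟩
  · rwa [wvol_comp_neg, neg_Iio] at hvol
  · simpa using hisop.comp_neg
  · rw [← neg_neg Ω, huniq _ hΩ.comp_neg, neg_Iio]

end Density

theorem halfline_unique_minimizer_of_monotone_finite_end_general
    (f : ℝ → ℝ) (hpos : ∀ x, 0 < f x)
    (V : ℝ) (hV : 0 < V) :
    (Monotone f → IntegrableOn f (Set.Iic 0) →
      ∃ x : ℝ, wvol f (Set.Iio x) = ENNReal.ofReal V ∧
        IsIsopRegion f (Set.Iio x) (ENNReal.ofReal V) ∧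
        ∀ Ω : Set ℝ, IsIsopRegion f Ω (ENNReal.ofReal V) → Ω = Set.Iio x) ∧
    (Antitone f → IntegrableOn f (Set.Ici 0) →
      ∃ x : ℝ, wvol f (Set.Ioi x) = ENNReal.ofReal V ∧
        IsIsopRegion f (Set.Ioi x) (ENNReal.ofReal V) ∧
        ∀ Ω : Set ℝ, IsIsopRegion f Ω (ENNReal.ofReal V) → Ω = Set.Ioi x) :=
  ⟨fun hf hint => hf.exists_unique_isIsopRegion_Iio hpos hint hV,
    fun hf hint => hf.exists_unique_isIsopRegion_Ioi hpos hint hV⟩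

/-- For a continuous positive monotone density on `ℝ` whose infimum
end `E` has finite measure, the half-line of weighted volume `V` containing `E` is the
unique isoperimetric region of volume `V`.  (`E = −∞` when `f` is nondecreasing and
`E = +∞` when `f` is nonincreasing.) -/
theorem halfline_unique_minimizer_of_monotone_finite_end
    (f : ℝ → ℝ) (hcont : Continuous f) (hpos : ∀ x, 0 < f x)
    (V : ℝ) (hV : 0 < V) :
    (Monotone f → IntegrableOn f (Set.Iic 0) →
      ∃ x : ℝ, wvol f (Set.Iio x) = ENNReal.ofReal V ∧
        IsIsopRegion f (Set.Iio x) (ENNReal.ofReal V) ∧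
        ∀ Ω : Set ℝ, IsIsopRegion f Ω (ENNReal.ofReal V) → Ω = Set.Iio x) ∧
    (Antitone f → IntegrableOn f (Set.Ici 0) →
      ∃ x : ℝ, wvol f (Set.Ioi x) = ENNReal.ofReal V ∧
        IsIsopRegion f (Set.Ioi x) (ENNReal.ofReal V) ∧
        ∀ Ω : Set ℝ, IsIsopRegion f Ω (ENNReal.ofReal V) → Ω = Set.Ioi x) :=
  halfline_unique_minimizer_of_monotone_finite_end_general f hpos V hV
end

section
/- Let f be a continuous positive log-concave density on ℝ (i.e. log f is concave). If f is not integrable on (−∞, 0] and not integrable on [0, +∞), then f is constant; consequently, every bounded open interval is an isoperimetric region of its own weighted volume. -/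
open Filter MeasureTheory Set

/-!
If `log f` is concave and strictly decreases somewhere, say from `a` to `b`, then beyond `b`
it stays below the line through `(a, log f a)` and `(b, log f b)`, so `f` is dominated by a
decaying exponential on `[b, ∞)` and is integrable on every right half-line; symmetrically
on the left. As `f` is integrable on neither half-line, `log f` is constant.

For a constant density `k > 0`, weighted volume is `k` times Lebesgue measure and weighted
perimeter is `k` times the number of boundary points. An open set of finite positive measure
contains a point `x` but neither ray from `x`, so its boundary meets both rays by
connectedness: it has at least the two boundary points of an interval.
-/

section Chord

variable {g : ℝ → ℝ} {a b x : ℝ}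

theorem ConcaveOn.le_chord_of_lt_right (hg : ConcaveOn ℝ univ g) (hab : a < b) (hbx : b < x) :
    g x ≤ g a + (g b - g a) / (b - a) * (x - a) := by
  have hslope : (g x - g b) / (x - b) ≤ (g b - g a) / (b - a) :=
    hg.slope_anti_adjacent (mem_univ a) (mem_univ x) hab hbx
  rw [div_le_iff₀ (sub_pos.mpr hbx)] at hslope
  have hchord : (g b - g a) / (b - a) * (b - a) = g b - g a :=
    div_mul_cancel₀ _ (sub_pos.mpr hab).ne'
  linarith

theorem ConcaveOn.le_chord_of_lt_left (hg : ConcaveOn ℝ univ g) (hab : a < b) (hxa : x < a) :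
    g x ≤ g a + (g b - g a) / (b - a) * (x - a) := by
  have hslope : (g b - g a) / (b - a) ≤ (g a - g x) / (a - x) :=
    hg.slope_anti_adjacent (mem_univ x) (mem_univ b) hxa hab
  rw [le_div_iff₀ (sub_pos.mpr hxa)] at hslope
  linarith

end Chord

section LogConcave

variable {f : ℝ → ℝ} {a b : ℝ}

theorem integrableOn_Ici_of_log_concave_of_lt (hf : Continuous f) (hpos : ∀ x, 0 < f x)
    (hconc : ConcaveOn ℝ univ (fun x => Real.log (f x))) (hab : a < b)
    (hdec : Real.log (f b) < Real.log (f a)) (c : ℝ) : IntegrableOn f (Ici c) := by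
  set s := (Real.log (f b) - Real.log (f a)) / (b - a)
  have hs : s < 0 := div_neg_of_neg_of_pos (by linarith) (by linarith)
  have htail : IntegrableOn f (Ioi b) := by
    refine ((integrableOn_exp_mul_Ioi hs b).const_mul (Real.exp (Real.log (f a) - s * a))).mono'
      hf.aestronglyMeasurable.restrict ?_
    filter_upwards [ae_restrict_mem measurableSet_Ioi] with x hx
    rw [Real.norm_of_nonneg (hpos x).le, ← Real.exp_log (hpos x), ← Real.exp_add]
    exact Real.exp_le_exp.mpr (by linarith [hconc.le_chord_of_lt_right hab hx])
  exact (hf.integrableOn_Icc.union htail).mono_set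
    fun x hx => (le_or_gt x b).imp (fun hxb => ⟨hx, hxb⟩) id

theorem integrableOn_Iic_of_log_concave_of_lt (hf : Continuous f) (hpos : ∀ x, 0 < f x)
    (hconc : ConcaveOn ℝ univ (fun x => Real.log (f x))) (hab : a < b)
    (hinc : Real.log (f a) < Real.log (f b)) (c : ℝ) : IntegrableOn f (Iic c) := by
  set s := (Real.log (f b) - Real.log (f a)) / (b - a)
  have hs : 0 < s := div_pos (by linarith) (by linarith)
  have htail : IntegrableOn f (Iio a) := by
    refine (((integrableOn_exp_mul_Iic hs a).mono_set Iio_subset_Iic_self).const_mul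
      (Real.exp (Real.log (f a) - s * a))).mono' hf.aestronglyMeasurable.restrict ?_
    filter_upwards [ae_restrict_mem measurableSet_Iio] with x hx
    rw [Real.norm_of_nonneg (hpos x).le, ← Real.exp_log (hpos x), ← Real.exp_add]
    exact Real.exp_le_exp.mpr (by linarith [hconc.le_chord_of_lt_left hab hx])
  exact (htail.union hf.integrableOn_Icc).mono_set
    fun x hx => (lt_or_ge x a).imp id (fun hax => ⟨hax, hx⟩)

theorem eq_of_log_concave_of_not_integrableOn (hf : Continuous f) (hpos : ∀ x, 0 < f x)
    (hconc : ConcaveOn ℝ univ (fun x => Real.log (f x)))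
    (hleft : ¬ IntegrableOn f (Iic 0)) (hright : ¬ IntegrableOn f (Ici 0)) (x y : ℝ) :
    f x = f y := by
  have hlog : ∀ a b, a < b → Real.log (f a) = Real.log (f b) := fun a b hab =>
    le_antisymm
      (not_lt.mp fun h => hright (integrableOn_Ici_of_log_concave_of_lt hf hpos hconc hab h 0))
      (not_lt.mp fun h => hleft (integrableOn_Iic_of_log_concave_of_lt hf hpos hconc hab h 0))
  refine Real.log_injOn_pos (hpos x) (hpos y) ?_
  rcases lt_trichotomy x y with hxy | rfl | hyx
  exacts [hlog x y hxy, rfl, (hlog y x hyx).symm]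

end LogConcave

theorem IsPreconnected.exists_mem_frontier {X : Type*} [TopologicalSpace X] {s u : Set X}
    (hs : IsPreconnected s) (hu : IsOpen u) (hsu : (s ∩ u).Nonempty) (hnot : ¬ s ⊆ u) :
    ∃ x ∈ s, x ∈ frontier u := by
  by_contra! h
  refine hnot (hs.subset_of_closure_inter_subset hu hsu ?_)
  rintro y ⟨hyc, hys⟩
  by_contra hyu
  exact h y hys ⟨hyc, by rwa [hu.interior_eq]⟩

section FrontierReal

variable {U : Set ℝ} {x : ℝ}

theorem IsOpen.exists_mem_frontier_gt (hU : IsOpen U) (hx : x ∈ U) (h : ¬ Ici x ⊆ U) :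
    ∃ p ∈ frontier U, x < p := by
  obtain ⟨p, hxp, hp⟩ := isPreconnected_Ici.exists_mem_frontier hU ⟨x, self_mem_Ici, hx⟩ h
  exact ⟨p, hp, lt_of_le_of_ne hxp fun hxp => (hU.frontier_eq ▸ hp).2 (hxp ▸ hx)⟩

theorem IsOpen.exists_mem_frontier_lt (hU : IsOpen U) (hx : x ∈ U) (h : ¬ Iic x ⊆ U) :
    ∃ q ∈ frontier U, q < x := by
  obtain ⟨q, hqx, hq⟩ := isPreconnected_Iic.exists_mem_frontier hU ⟨x, self_mem_Iic, hx⟩ h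
  exact ⟨q, hq, lt_of_le_of_ne hqx fun hqx => (hU.frontier_eq ▸ hq).2 (hqx ▸ hx)⟩

theorem IsOpen.two_le_encard_frontier (hU : IsOpen U) (h0 : volume U ≠ 0) (htop : volume U ≠ ⊤) :
    2 ≤ (frontier U).encard := by
  obtain ⟨x, hx⟩ := nonempty_of_measure_ne_zero h0
  have hray : ∀ R : Set ℝ, volume R = ⊤ → ¬ R ⊆ U := fun R hR hRU =>
    htop (top_le_iff.mp (hR ▸ measure_mono hRU))
  obtain ⟨p, hp, hxp⟩ := hU.exists_mem_frontier_gt hx (hray _ Real.volume_Ici)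
  obtain ⟨q, hq, hqx⟩ := hU.exists_mem_frontier_lt hx (hray _ Real.volume_Iic)
  calc (2 : ℕ∞) = ({q, p} : Set ℝ).encard := (encard_pair (hqx.trans hxp).ne).symm
    _ ≤ (frontier U).encard := encard_le_encard (pair_subset hq hp)

end FrontierReal

section ConstantDensity

variable {k : ℝ}

theorem wvol_const (k : ℝ) (Ω : Set ℝ) : wvol (fun _ => k) Ω = ENNReal.ofReal k * volume Ω :=
  setLIntegral_const Ω _

theorem wper_const (k : ℝ) (Ω : Set ℝ) :
    wper (fun _ => k) Ω = (frontier Ω).encard * ENNReal.ofReal k :=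
  ENNReal.tsum_const _

theorem isIsopRegion_Ioo_of_const (hk : 0 < k) {a b : ℝ} (hab : a < b) :
    IsIsopRegion (fun _ => k) (Ioo a b) (wvol (fun _ => k) (Ioo a b)) := by
  refine ⟨isOpen_Ioo, rfl, fun U hU hUvol => ?_⟩
  have hvol : volume U = ENNReal.ofReal (b - a) := by
    rw [wvol_const, wvol_const, Real.volume_Ioo] at hUvol
    exact (ENNReal.mul_right_inj (ENNReal.ofReal_pos.mpr hk).ne' ENNReal.ofReal_ne_top).mp hUvol
  rw [wper_const, wper_const, frontier_Ioo hab, encard_pair hab.ne]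
  gcongr
  exact_mod_cast hU.two_le_encard_frontier (by simpa [hvol] using hab) (by simp [hvol])

end ConstantDensity

/-- A continuous positive log-concave density on `ℝ` which is not
integrable on `(−∞,0]` nor on `[0,+∞)` is constant; consequently every bounded open
interval is an isoperimetric region of its own weighted volume. -/
theorem logconcave_both_ends_infinite_constant
    (f : ℝ → ℝ) (hcont : Continuous f) (hpos : ∀ x, 0 < f x)
    (hconc : ConcaveOn ℝ Set.univ (fun x => Real.log (f x)))
    (h₁ : ¬ IntegrableOn f (Set.Iic 0))
    (h₂ : ¬ IntegrableOn f (Set.Ici 0)) :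
    (∃ k : ℝ, ∀ x : ℝ, f x = k) ∧
    ∀ a b : ℝ, a < b → IsIsopRegion f (Set.Ioo a b) (wvol f (Set.Ioo a b)) := by
  have hconst : f = fun _ => f 0 :=
    funext fun x => eq_of_log_concave_of_not_integrableOn hcont hpos hconc h₁ h₂ x 0
  refine ⟨⟨f 0, congrFun hconst⟩, fun a b hab => ?_⟩
  rw [hconst]
  exact isIsopRegion_Ioo_of_const (hpos 0) hab
end

section
/- Let f = e^ψ be a smooth positive density on ℝ that is symmetric (f(−x) = f(x) for all x) and strictly log-convex (ψ is strictly convex). Then for every V > 0 the symmetric open interval (−x, x) with vol((−x, x)) = V is the unique isoperimetric region of volume V. -/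
open Filter MeasureTheory Set

namespace IsopAux

variable {f : ℝ → ℝ}

lemma wvol_mono {s t : Set ℝ} (h : s ⊆ t) : wvol f s ≤ wvol f t :=
  lintegral_mono_set h

lemma wvol_Ioo (hc : Continuous f) (hnn : ∀ x, 0 ≤ f x) {a b : ℝ} (hab : a ≤ b) :
    wvol f (Set.Ioo a b) = ENNReal.ofReal (∫ t in a..b, f t) := by
  rw [intervalIntegral.integral_of_le hab, integral_Ioc_eq_integral_Ioo,
    MeasureTheory.ofReal_integral_eq_lintegral_ofReal
      ((hc.integrableOn_Icc).mono_set Set.Ioo_subset_Icc_self)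
      (ae_of_all _ fun x => hnn x)]
  rfl

lemma wvol_Icc (hc : Continuous f) (hnn : ∀ x, 0 ≤ f x) {a b : ℝ} (hab : a ≤ b) :
    wvol f (Set.Icc a b) = ENNReal.ofReal (∫ t in a..b, f t) := by
  rw [intervalIntegral.integral_of_le hab, ← MeasureTheory.integral_Icc_eq_integral_Ioc,
    MeasureTheory.ofReal_integral_eq_lintegral_ofReal (hc.integrableOn_Icc)
      (ae_of_all _ fun x => hnn x)]
  rfl

lemma wvol_Ioi_top (hm : 0 < f 0) (hfm : ∀ x, f 0 ≤ f x) (M : ℝ) :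
    wvol f (Set.Ioi M) = ⊤ := by
  have h1 : (∫⁻ _ in Set.Ioi M, ENNReal.ofReal (f 0)) ≤ wvol f (Set.Ioi M) :=
    lintegral_mono fun x => ENNReal.ofReal_le_ofReal (hfm x)
  rw [setLIntegral_const, Real.volume_Ioi,
    ENNReal.mul_top (ENNReal.ofReal_pos.mpr hm).ne'] at h1
  exact top_le_iff.mp h1

lemma wvol_Iio_top (hm : 0 < f 0) (hfm : ∀ x, f 0 ≤ f x) (M : ℝ) :
    wvol f (Set.Iio M) = ⊤ := by
  have h1 : (∫⁻ _ in Set.Iio M, ENNReal.ofReal (f 0)) ≤ wvol f (Set.Iio M) :=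
    lintegral_mono fun x => ENNReal.ofReal_le_ofReal (hfm x)
  rw [setLIntegral_const, Real.volume_Iio,
    ENNReal.mul_top (ENNReal.ofReal_pos.mpr hm).ne'] at h1
  exact top_le_iff.mp h1

lemma wper_top (hm : 0 < f 0) (hfm : ∀ x, f 0 ≤ f x) {Ω : Set ℝ}
    (hB : (frontier Ω).Infinite) : wper f Ω = ⊤ := by
  have : Infinite (frontier Ω) := hB.to_subtype
  have h : (∑' _ : frontier Ω, ENNReal.ofReal (f 0)) ≤ wper f Ω :=
    ENNReal.tsum_le_tsum fun x => ENNReal.ofReal_le_ofReal (hfm x)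
  rw [ENNReal.tsum_const_eq_top_of_ne_zero (ENNReal.ofReal_pos.mpr hm).ne'] at h
  exact top_le_iff.mp h

lemma wper_Ioo (f : ℝ → ℝ) {a b : ℝ} (hab : a < b) :
    wper f (Set.Ioo a b) = ENNReal.ofReal (f a) + ENNReal.ofReal (f b) := by
  classical
  have h1 : frontier (Set.Ioo a b) = (({a, b} : Finset ℝ) : Set ℝ) := by
    rw [frontier_Ioo hab]; simp
  calc wper f (Set.Ioo a b)
      = ∑' x : ((({a, b} : Finset ℝ) : Set ℝ)), ENNReal.ofReal (f x) :=
        tsum_congr_set_coe (fun t => ENNReal.ofReal (f t)) h1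
    _ = ∑ t ∈ ({a, b} : Finset ℝ), ENNReal.ofReal (f t) :=
        Finset.tsum_subtype' ({a, b} : Finset ℝ) (fun t => ENNReal.ofReal (f t))
    _ = ENNReal.ofReal (f a) + ENNReal.ofReal (f b) := Finset.sum_pair hab.ne

lemma triple_le_wper (f : ℝ → ℝ) {Ω : Set ℝ} {p q r : ℝ} (hp : p ∈ frontier Ω)
    (hq : q ∈ frontier Ω) (hr : r ∈ frontier Ω) (hpq : p ≠ q) (hpr : p ≠ r)
    (hqr : q ≠ r) :
    ENNReal.ofReal (f p) + ENNReal.ofReal (f q) + ENNReal.ofReal (f r) ≤ wper f Ω := by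
  classical
  have h := ENNReal.sum_le_tsum (f := fun x : frontier Ω => ENNReal.ofReal (f x))
    ({⟨p, hp⟩, ⟨q, hq⟩, ⟨r, hr⟩} : Finset (frontier Ω))
  rw [Finset.sum_insert (by simp [hpq, hpr]),
    Finset.sum_pair (by simp only [ne_eq, Subtype.mk.injEq]; exact hqr)] at h
  calc ENNReal.ofReal (f p) + ENNReal.ofReal (f q) + ENNReal.ofReal (f r)
      = ENNReal.ofReal (f p) + (ENNReal.ofReal (f q) + ENNReal.ofReal (f r)) := by ring
    _ ≤ wper f Ω := h

section Core

variable (f φ : ℝ → ℝ) (hc : Continuous f) (hφc : Continuous φ)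
  (hpos : ∀ t, 0 < f t)
  (hder : ∀ t : ℝ, HasDerivAt f (φ t * f t) t)
  (hφmono : StrictMono φ) (hφodd : ∀ t, φ (-t) = -φ t)
  (hfeven : ∀ t, f (-t) = f t)

include hc hφc hpos hder hφmono hφodd hfeven in
lemma core_aux {x a b : ℝ} (hx : 0 < x) (hax : -x < a)
    (hvol : (∫ t in a..b, f t) = ∫ t in (-x)..x, f t) :
    2 * f x < f a + f b := by
  have hint : ∀ u v : ℝ, IntervalIntegrable f MeasureTheory.volume u v :=
    fun u v => hc.intervalIntegrable u v
  set F : ℝ → ℝ := fun t => ∫ s in (0:ℝ)..t, f s with hFdef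
  have hsub : ∀ u v : ℝ, F v - F u = ∫ s in u..v, f s := fun u v =>
    intervalIntegral.integral_interval_sub_left (hint 0 v) (hint 0 u)
  have hFlt : ∀ u v : ℝ, u < v → F u < F v := fun u v huv => by
    have h1 := intervalIntegral.intervalIntegral_pos_of_pos (hint u v) hpos huv
    have h2 := hsub u v; linarith
  have hvol' : F b - F a = F x - F (-x) := by rw [hsub, hsub, hvol]
  have hΔ : 0 < F a - F (-x) := by have := hFlt _ _ hax; linarith
  have hbx : x < b := by
    by_contra h
    push_neg at h
    have hle : F b ≤ F x := by
      rcases h.lt_or_eq with h | h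
      · exact (hFlt _ _ h).le
      · rw [h]
    linarith
  have hiφf : ∀ u v : ℝ, IntervalIntegrable (fun t => φ t * f t) MeasureTheory.volume u v :=
    fun u v => (hφc.mul hc).intervalIntegrable u v
  have h1 : (∫ t in x..b, φ t * f t) = f b - f x :=
    intervalIntegral.integral_eq_sub_of_hasDerivAt (fun t _ => hder t) (hiφf x b)
  have h2 : (∫ t in (-x)..a, φ t * f t) = f a - f (-x) :=
    intervalIntegral.integral_eq_sub_of_hasDerivAt (fun t _ => hder t) (hiφf _ _)
  have h3 : (0:ℝ) < ∫ t in x..b, (φ t * f t - φ x * f t) := by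
    apply intervalIntegral.intervalIntegral_pos_of_pos_on
    · exact ((hφc.mul hc).sub ((continuous_const.mul hc : Continuous fun t => φ x * f t))).intervalIntegrable _ _
    · intro t ht
      have h5 := hφmono ht.1
      have h6 := hpos t
      nlinarith
    · exact hbx
  have h4 : (∫ t in x..b, (φ t * f t - φ x * f t))
      = (f b - f x) - φ x * (F b - F x) := by
    rw [intervalIntegral.integral_sub (hiφf _ _)
      (((show Continuous fun t => φ x * f t from continuous_const.mul hc)).intervalIntegrable _ _), h1,
      intervalIntegral.integral_const_mul, ← hsub]
  have h5 : φ (-x) * (F a - F (-x)) ≤ ∫ t in (-x)..a, φ t * f t := by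
    have h6 := intervalIntegral.integral_mono_on (μ := MeasureTheory.volume) hax.le
      (((show Continuous fun t => φ (-x) * f t from continuous_const.mul hc)).intervalIntegrable _ _) (hiφf _ _)
      (fun t ht => mul_le_mul_of_nonneg_right (hφmono.monotone ht.1) (hpos t).le)
    rwa [intervalIntegral.integral_const_mul, ← hsub] at h6
  have hFbx : F b - F x = F a - F (-x) := by linarith
  have e1 : φ x * (F b - F x) = φ x * (F a - F (-x)) := by rw [hFbx]
  have e2 : φ (-x) * (F a - F (-x)) = -(φ x * (F a - F (-x))) := by
    rw [hφodd x]; ring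
  have hfx := hfeven x
  linarith

include hc hφc hpos hder hφmono hφodd hfeven in
lemma core {x a b : ℝ} (hx : 0 < x)
    (hvol : (∫ t in a..b, f t) = ∫ t in (-x)..x, f t) :
    (a = -x ∧ b = x) ∨ 2 * f x < f a + f b := by
  have hint : ∀ u v : ℝ, IntervalIntegrable f MeasureTheory.volume u v :=
    fun u v => hc.intervalIntegrable u v
  rcases lt_trichotomy a (-x) with h | h | h
  · right
    have hbx : b < x := by
      by_contra hcon
      push_neg at hcon
      have hsplit1 : (∫ t in a..(-x), f t) + ∫ t in (-x)..x, f t = ∫ t in a..x, f t :=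
        intervalIntegral.integral_add_adjacent_intervals (hint _ _) (hint _ _)
      have hsplit2 : (∫ t in a..x, f t) + ∫ t in x..b, f t = ∫ t in a..b, f t :=
        intervalIntegral.integral_add_adjacent_intervals (hint _ _) (hint _ _)
      have p1 : 0 < ∫ t in a..(-x), f t := intervalIntegral.intervalIntegral_pos_of_pos (hint _ _) hpos h
      have p2 : 0 ≤ ∫ t in x..b, f t :=
        intervalIntegral.integral_nonneg hcon fun u _ => (hpos u).le
      linarith
    have hvol' : (∫ t in (-b)..(-a), f t) = ∫ t in (-x)..x, f t := by
      rw [← intervalIntegral.integral_comp_neg]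
      rw [show (∫ t in a..b, f (-t)) = ∫ t in a..b, f t from
        intervalIntegral.integral_congr fun t _ => hfeven t]
      exact hvol
    have hres := core_aux f φ hc hφc hpos hder hφmono hφodd hfeven hx
      (show -x < -b by linarith) hvol'
    have ea := hfeven a
    have eb := hfeven b
    linarith
  · subst h
    left
    refine ⟨rfl, ?_⟩
    by_contra hne
    rcases lt_or_gt_of_ne hne with hlt | hgt
    · have hsplit : (∫ t in (-x)..b, f t) + ∫ t in b..x, f t = ∫ t in (-x)..x, f t :=
        intervalIntegral.integral_add_adjacent_intervals (hint _ _) (hint _ _)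
      have p1 : 0 < ∫ t in b..x, f t := intervalIntegral.intervalIntegral_pos_of_pos (hint _ _) hpos hlt
      linarith
    · have hsplit : (∫ t in (-x)..x, f t) + ∫ t in x..b, f t = ∫ t in (-x)..b, f t :=
        intervalIntegral.integral_add_adjacent_intervals (hint _ _) (hint _ _)
      have p1 : 0 < ∫ t in x..b, f t := intervalIntegral.intervalIntegral_pos_of_pos (hint _ _) hpos hgt
      linarith
  · exact Or.inr (core_aux f φ hc hφc hpos hder hφmono hφodd hfeven hx h hvol)

end Core

end IsopAux

open IsopAux in
/-- For a smooth, symmetric, strictly log-convex density `f = e^ψ`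
on `ℝ`, the symmetric interval `(−x, x)` of weighted volume `V` is the unique
isoperimetric region of volume `V`, for every `V > 0`. -/
theorem symmetric_interval_unique_minimizer_strictly_logconvex
    (ψ f : ℝ → ℝ) (hf : ∀ x : ℝ, f x = Real.exp (ψ x))
    (hsmooth : ContDiff ℝ (⊤ : ℕ∞) ψ)
    (hsym : ∀ x : ℝ, f (-x) = f x)
    (hconv : StrictConvexOn ℝ Set.univ ψ)
    (V : ℝ) (hV : 0 < V) :
    ∃ x : ℝ, 0 < x ∧ wvol f (Set.Ioo (-x) x) = ENNReal.ofReal V ∧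
      IsIsopRegion f (Set.Ioo (-x) x) (ENNReal.ofReal V) ∧
      ∀ Ω : Set ℝ, IsIsopRegion f Ω (ENNReal.ofReal V) → Ω = Set.Ioo (-x) x := by
  classical
  -- basic facts about the density
  have hfeq : f = fun t => Real.exp (ψ t) := funext hf
  have hψc : Continuous ψ := hsmooth.continuous
  have hc : Continuous f := by rw [hfeq]; exact Real.continuous_exp.comp hψc
  have hpos : ∀ t, 0 < f t := fun t => by rw [hf]; exact Real.exp_pos _
  have hnn : ∀ t, 0 ≤ f t := fun t => (hpos t).le
  have hψd : Differentiable ℝ ψ := hsmooth.differentiable (by simp)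
  set φ : ℝ → ℝ := deriv ψ with hφdef
  have hφc : Continuous φ := hsmooth.continuous_deriv (by simp)
  have hder : ∀ t : ℝ, HasDerivAt f (φ t * f t) t := by
    intro t
    have h1 : HasDerivAt (fun s => Real.exp (ψ s)) (Real.exp (ψ t) * φ t) t :=
      ((hψd t).hasDerivAt).exp
    rw [hfeq]
    simpa [mul_comm] using h1
  have hfeven : ∀ t : ℝ, f (-t) = f t := hsym
  have hψeven : ∀ t, ψ (-t) = ψ t := fun t =>
    Real.exp_eq_exp.mp (by rw [← hf, ← hf, hsym])
  have hφmono : StrictMono φ :=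
    strictMonoOn_univ.mp (hconv.strictMonoOn_deriv fun s _ => hψd s)
  have hφodd : ∀ t, φ (-t) = -φ t := by
    intro t
    have h1 : (fun s => ψ (-s)) = ψ := funext hψeven
    have h2 : deriv (fun s => ψ (-s)) t = -deriv ψ (-t) := deriv_comp_neg ψ t
    rw [h1] at h2
    simp only [hφdef]
    rw [h2]; ring
  -- ψ is monotone on [0, ∞), with minimum at 0
  have hψmono : ∀ s t : ℝ, 0 ≤ s → s ≤ t → ψ s ≤ ψ t := by
    intro s t hs hst
    have hseg : s ∈ segment ℝ (-t) t := by
      rw [segment_eq_Icc (by linarith : -t ≤ t)]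
      exact ⟨by linarith, hst⟩
    have h := hconv.convexOn.le_on_segment (Set.mem_univ (-t)) (Set.mem_univ t) hseg
    rwa [hψeven t, max_self] at h
  have hfmono : ∀ s t : ℝ, 0 ≤ s → s ≤ t → f s ≤ f t := fun s t hs hst => by
    rw [hf, hf]; exact Real.exp_le_exp.mpr (hψmono s t hs hst)
  have hmin : ∀ t, f 0 ≤ f t := by
    intro t
    rcases le_total 0 t with h | h
    · exact hfmono 0 t le_rfl h
    · rw [← hsym t]; exact hfmono 0 (-t) le_rfl (by linarith)
  have hm : 0 < f 0 := hpos 0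
  -- interval integrability
  have hint : ∀ u v : ℝ, IntervalIntegrable f MeasureTheory.volume u v :=
    fun u v => hc.intervalIntegrable u v
  -- the symmetric volume function G
  set G : ℝ → ℝ := fun y => ∫ t in (-y)..y, f t with hGdef
  have hGstrict : ∀ u v : ℝ, 0 ≤ u → u < v → G u < G v := by
    intro u v hu huv
    have hsplit1 : (∫ t in (-v)..(-u), f t) + ∫ t in (-u)..u, f t = ∫ t in (-v)..u, f t :=
      intervalIntegral.integral_add_adjacent_intervals (hint _ _) (hint _ _)
    have hsplit2 : (∫ t in (-v)..u, f t) + ∫ t in u..v, f t = ∫ t in (-v)..v, f t :=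
      intervalIntegral.integral_add_adjacent_intervals (hint _ _) (hint _ _)
    have p1 : 0 < ∫ t in (-v)..(-u), f t :=
      intervalIntegral.intervalIntegral_pos_of_pos (hint _ _) hpos (by linarith)
    have p2 : 0 < ∫ t in u..v, f t := intervalIntegral.intervalIntegral_pos_of_pos (hint _ _) hpos huv
    simp only [hGdef]
    linarith
  have hGc : Continuous G := by
    have hF : Continuous fun b => ∫ s in (0:ℝ)..b, f s :=
      intervalIntegral.continuous_primitive hint 0
    have : G = fun y => (∫ s in (0:ℝ)..y, f s) - ∫ s in (0:ℝ)..(-y), f s := by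
      funext y
      rw [hGdef]
      exact (intervalIntegral.integral_interval_sub_left (hint 0 y) (hint 0 (-y))).symm
    rw [this]
    exact hF.sub (hF.comp continuous_neg)
  have hG0 : G 0 = 0 := by simp [hGdef]
  -- existence of symmetric intervals of any volume
  have hG : ∀ W : ℝ, 0 < W → ∃ y : ℝ, 0 < y ∧ G y = W := by
    intro W hW
    set R : ℝ := W / (2 * f 0) + 1 with hRdef
    have hR : 0 < R := by positivity
    have hGR : W ≤ G R := by
      have h1 : (∫ t in (-R)..R, (fun _ => f 0) t) ≤ ∫ t in (-R)..R, f t :=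
        intervalIntegral.integral_mono_on (by linarith)
          (intervalIntegrable_const) (hint _ _) (fun t _ => hmin t)
      rw [intervalIntegral.integral_const, smul_eq_mul] at h1
      have h2 : (R - -R) * f 0 = 2 * R * f 0 := by ring
      have h3 : 2 * R * f 0 = W + 2 * f 0 := by
        rw [hRdef]
        field_simp
      show W ≤ ∫ t in (-R)..R, f t
      nlinarith
    have hIcc : Set.Icc (G 0) (G R) ⊆ G '' Set.Icc 0 R :=
      intermediate_value_Icc hR.le hGc.continuousOn
    obtain ⟨y, hy, hGy⟩ := hIcc ⟨by rw [hG0]; linarith, hGR⟩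
    refine ⟨y, ?_, hGy⟩
    rcases hy.1.lt_or_eq with h | h
    · exact h
    · exfalso; rw [← h, hG0] at hGy; linarith
  obtain ⟨x, hx, hGx⟩ := hG V hV
  simp only [hGdef] at hGx
  have hxx : -x < x := by linarith
  -- wvol of the candidate interval
  have hvolIoo : wvol f (Set.Ioo (-x) x) = ENNReal.ofReal V := by
    rw [wvol_Ioo hc hnn hxx.le, hGx]
  -- the key dichotomy
  have key : ∀ U : Set ℝ, IsOpen U → wvol f U = ENNReal.ofReal V →
      U = Set.Ioo (-x) x ∨ ENNReal.ofReal (f (-x) + f x) < wper f U := by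
    intro U hU hUvol
    have hVne : (ENNReal.ofReal V) ≠ 0 := (ENNReal.ofReal_pos.mpr hV).ne'
    have hVnetop : (ENNReal.ofReal V) ≠ ⊤ := ENNReal.ofReal_ne_top
    have hUne : U.Nonempty := by
      rw [Set.nonempty_iff_ne_empty]
      intro h
      rw [h] at hUvol
      simp [wvol] at hUvol
      linarith
    by_cases hBfin : (frontier U).Finite
    · -- boundedness of U
      obtain ⟨M, hM⟩ := hBfin.bddAbove
      obtain ⟨N, hN⟩ := hBfin.bddBelow
      have hcover : ∀ s : ℝ, s ∉ frontier U → s ∈ U ∪ (closure U)ᶜ := by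
        intro s hs
        by_cases h1 : s ∈ U
        · exact Or.inl h1
        · refine Or.inr fun hcl => hs ?_
          rw [hU.frontier_eq]
          exact ⟨hcl, h1⟩
      have hdisj : Disjoint U (closure U)ᶜ :=
        disjoint_compl_right.mono_left subset_closure
      have hUa : BddAbove U := by
        refine ⟨M, fun t ht => ?_⟩
        by_contra hlt
        push_neg at hlt
        have hsub2 : Set.Ioi M ⊆ U ∪ (closure U)ᶜ := fun s hs =>
          hcover s fun hsF => absurd (hM hsF) (not_le.mpr hs)
        have hIoi : Set.Ioi M ⊆ U :=
          IsPreconnected.subset_left_of_subset_union hU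
            isClosed_closure.isOpen_compl hdisj hsub2 ⟨t, hlt, ht⟩ isPreconnected_Ioi
        have hle : wvol f (Set.Ioi M) ≤ wvol f U := wvol_mono hIoi
        rw [hUvol, wvol_Ioi_top hm hmin M] at hle
        exact hVnetop (top_le_iff.mp hle)
      have hUb : BddBelow U := by
        refine ⟨N, fun t ht => ?_⟩
        by_contra hlt
        push_neg at hlt
        have hsub2 : Set.Iio N ⊆ U ∪ (closure U)ᶜ := fun s hs =>
          hcover s fun hsF => absurd (hN hsF) (not_le.mpr hs)
        have hIio : Set.Iio N ⊆ U :=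
          IsPreconnected.subset_left_of_subset_union hU
            isClosed_closure.isOpen_compl hdisj hsub2 ⟨t, hlt, ht⟩ isPreconnected_Iio
        have hle : wvol f (Set.Iio N) ≤ wvol f U := wvol_mono hIio
        rw [hUvol, wvol_Iio_top hm hmin N] at hle
        exact hVnetop (top_le_iff.mp hle)
      set a : ℝ := sInf U with hadef
      set b : ℝ := sSup U with hbdef
      have haU : a ∉ U := by
        intro h
        obtain ⟨ε, hε, hball⟩ := Metric.isOpen_iff.mp hU a h
        have h1 : a - ε / 2 ∈ U := by
          apply hball
          rw [Metric.mem_ball, Real.dist_eq]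
          rw [abs_of_nonpos (by linarith)]
          linarith
        have h2 := csInf_le hUb h1
        rw [← hadef] at h2
        linarith
      have hbU : b ∉ U := by
        intro h
        obtain ⟨ε, hε, hball⟩ := Metric.isOpen_iff.mp hU b h
        have h1 : b + ε / 2 ∈ U := by
          apply hball
          rw [Metric.mem_ball, Real.dist_eq]
          rw [abs_of_nonneg (by linarith)]
          linarith
        have h2 := le_csSup hUa h1
        rw [← hbdef] at h2
        linarith
      have haF : a ∈ frontier U := by
        rw [hU.frontier_eq]
        exact ⟨csInf_mem_closure hUne hUb, haU⟩
      have hbF : b ∈ frontier U := by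
        rw [hU.frontier_eq]
        exact ⟨csSup_mem_closure hUne hUa, hbU⟩
      have hUIcc : U ⊆ Set.Icc a b := fun t ht => ⟨csInf_le hUb ht, le_csSup hUa ht⟩
      obtain ⟨u, hu⟩ := hUne
      have hau : a < u := (hUIcc hu).1.lt_of_ne fun h => haU (h ▸ hu)
      have hub : u < b := (hUIcc hu).2.lt_of_ne fun h => hbU (h.symm ▸ hu)
      have hab : a < b := hau.trans hub
      have hWnn : 0 ≤ ∫ t in a..b, f t :=
        intervalIntegral.integral_nonneg hab.le fun t _ => hnn t
      have hW : V ≤ ∫ t in a..b, f t := by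
        have h1 : wvol f U ≤ wvol f (Set.Icc a b) := wvol_mono hUIcc
        rw [hUvol, wvol_Icc hc hnn hab.le] at h1
        exact (ENNReal.ofReal_le_ofReal_iff hWnn).mp h1
      by_cases hmid : ∃ p ∈ frontier U, p ∈ Set.Ioo a b
      · right
        obtain ⟨p, hpF, hpI⟩ := hmid
        set W : ℝ := ∫ t in a..b, f t with hWdef
        have hWpos : 0 < W := lt_of_lt_of_le hV hW
        obtain ⟨y, hy, hGy⟩ := hG W hWpos
        simp only [hGdef] at hGy
        have hxy : x ≤ y := by
          by_contra hcon
          push_neg at hcon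
          have h9 := hGstrict y x hy.le hcon
          simp only [hGdef] at h9
          rw [hGx, hGy] at h9
          linarith
        have hfxy : f x ≤ f y := hfmono x y hx.le hxy
        have hcore := core f φ hc hφc hpos hder hφmono hφodd hfeven hy
          (show (∫ t in a..b, f t) = ∫ t in (-y)..y, f t by rw [hGy])
        have h2fy : 2 * f y ≤ f a + f b := by
          rcases hcore with ⟨ha2, hb2⟩ | hlt
          · rw [ha2, hb2, hsym]; ring_nf; exact le_rfl
          · exact hlt.le
        have hplt : f (-x) + f x < f a + f b + f p := by
          have := hpos p
          rw [hsym]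
          linarith
        calc ENNReal.ofReal (f (-x) + f x)
            < ENNReal.ofReal (f a + f b + f p) := by
              rw [ENNReal.ofReal_lt_ofReal_iff (by linarith [hpos p, hpos a, hpos b])]
              exact hplt
          _ = ENNReal.ofReal (f a) + ENNReal.ofReal (f b) + ENNReal.ofReal (f p) := by
              rw [ENNReal.ofReal_add (by have := hpos a; have := hpos b; linarith) (hnn p),
                ENNReal.ofReal_add (hnn a) (hnn b)]
          _ ≤ wper f U := triple_le_wper f haF hbF hpF hab.ne hpI.1.ne hpI.2.ne'
      · -- U is the interval (a, b)
        push_neg at hmid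
        have hsub2 : Set.Ioo a b ⊆ U ∪ (closure U)ᶜ := fun s hs =>
          hcover s fun hsF => hmid s hsF hs
        have hIooU : Set.Ioo a b ⊆ U :=
          IsPreconnected.subset_left_of_subset_union hU
            isClosed_closure.isOpen_compl hdisj hsub2 ⟨u, ⟨hau, hub⟩, hu⟩
            isPreconnected_Ioo
        have hUeq : U = Set.Ioo a b := by
          apply subset_antisymm _ hIooU
          intro t ht
          exact ⟨(hUIcc ht).1.lt_of_ne fun h => haU (h ▸ ht),
            (hUIcc ht).2.lt_of_ne fun h => hbU (h.symm ▸ ht)⟩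
        have hVW : (∫ t in a..b, f t) = V := by
          have h1 := hUvol
          rw [hUeq, wvol_Ioo hc hnn hab.le] at h1
          exact (ENNReal.ofReal_eq_ofReal_iff hWnn hV.le).mp h1
        have hcore := core f φ hc hφc hpos hder hφmono hφodd hfeven hx
          (show (∫ t in a..b, f t) = ∫ t in (-x)..x, f t by rw [hVW, ← hGx])
        rcases hcore with ⟨ha2, hb2⟩ | hlt
        · left; rw [hUeq, ha2, hb2]
        · right
          rw [hUeq, wper_Ioo f hab,
            ← ENNReal.ofReal_add (hnn a) (hnn b),
            ENNReal.ofReal_lt_ofReal_iff (by have := hpos a; have := hpos b; linarith)]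
          rw [hsym]
          linarith
    · right
      rw [wper_top hm hmin hBfin]
      exact ENNReal.ofReal_lt_top
  refine ⟨x, hx, hvolIoo, ⟨isOpen_Ioo, hvolIoo, ?_⟩, ?_⟩
  · intro U hUo hUv
    rcases key U hUo hUv with h | hlt
    · rw [h]
    · rw [wper_Ioo f hxx, ← ENNReal.ofReal_add (hnn (-x)) (hnn x)]
      exact hlt.le
  · intro Ω hΩ
    obtain ⟨hΩo, hΩv, hΩmin⟩ := hΩ
    rcases key Ω hΩo hΩv with h | hlt
    · exact h
    · exfalso
      have h1 := hΩmin (Set.Ioo (-x) x) isOpen_Ioo hvolIoo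
      rw [wper_Ioo f hxx, ← ENNReal.ofReal_add (hnn (-x)) (hnn x)] at h1
      exact absurd h1 (not_le.mpr hlt)
end
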